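/- Let G and H be finite connected simple graphs, each with at least two vertices, and let S ⊆ V(G) × V(H). Then S is an MEG-set of the Cartesian product G □ H if and only if for every x ∈ V(G) the slice S_{x,*} = {v ∈ V(H) : (x,v) ∈ S} is an MEG-set of H and for every y ∈ V(H) the slice S_{*,y} = {v ∈ V(G) : (v,y) ∈ S} is an MEG-set of G. -/

import Mathlib

open SimpleGraph

/-- `S` is a monitoring edge-geodetic set (MEG-set) of `G`: for every edge `e` of `G`
there are `x, y ∈ S` whose distance in `G − e` differs from their distance in `G`
(including the case that they become disconnected in `G − e`). -/
def IsMEGSet {V : Type*} (G : SimpleGraph V) (S : Set V) : Prop :=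
  ∀ e ∈ G.edgeSet, ∃ x ∈ S, ∃ y ∈ S,
    ¬ (G.deleteEdges {e}).Reachable x y ∨ (G.deleteEdges {e}).dist x y ≠ G.dist x y

/-- The monitoring edge-geodetic number: the minimum cardinality of an MEG-set. -/
noncomputable def meg {V : Type*} [Fintype V] (G : SimpleGraph V) : ℕ :=
  sInf {n | ∃ S : Set V, IsMEGSet G S ∧ S.ncard = n}

/-- The strong product `G ⊠ H` of two simple graphs: `(a,b)` adjacent to `(c,d)` iff
`a = c` and `bd ∈ E(H)`, or `b = d` and `ac ∈ E(G)`, or `ac ∈ E(G)` and `bd ∈ E(H)`. -/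
def strongProd {α β : Type*} (G : SimpleGraph α) (H : SimpleGraph β) :
    SimpleGraph (α × β) where
  Adj x y := (x.1 = y.1 ∧ H.Adj x.2 y.2) ∨ (x.2 = y.2 ∧ G.Adj x.1 y.1) ∨
    (G.Adj x.1 y.1 ∧ H.Adj x.2 y.2)
  symm := ⟨fun x y => by
    rintro (⟨h1, h2⟩ | ⟨h1, h2⟩ | ⟨h1, h2⟩)
    · exact Or.inl ⟨h1.symm, h2.symm⟩
    · exact Or.inr (Or.inl ⟨h1.symm, h2.symm⟩)
    · exact Or.inr (Or.inr ⟨h1.symm, h2.symm⟩)⟩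
  loopless := ⟨fun x => by
    rintro (⟨_, h⟩ | ⟨_, h⟩ | ⟨h, _⟩)
    · exact H.ne_of_adj h rfl
    · exact G.ne_of_adj h rfl
    · exact G.ne_of_adj h rfl⟩

infixl:70 " ⊠ " => strongProd

/-!
A pair `x, y` monitors an edge `e` exactly when `e` lies on every geodesic from `x` to `y`.
Distances in `G □ H` add up, `d((x,u),(y,w)) = d_G(x,y) + d_H(u,w)`, so the projection of a
geodesic to a factor is a geodesic, and the two L-shaped walks (first along `G`, then along `H`,
or the other way round) are geodesics. If `(x,u), (y,w)` monitor the edge `((a,b),(c,b))`, both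
L-shaped geodesics contain it, which forces `u = w = b`; lifting geodesics of `G` to level `b`
then shows that `x, y` monitor `ac` in `G`. Conversely, if `x, y` monitor `ac`, a geodesic from
`(x,b)` to `(y,b)` projects to a geodesic of `G`, so it uses some copy `((a,b₀),(c,b₀))` of `ac`;
visiting level `b₀` costs `2 d_H(b,b₀)`, hence `b₀ = b`. Edges along `H` follow by the symmetry
`G □ H ≃g H □ G`.
-/

namespace SimpleGraph

section

variable {V W : Type*} {G : SimpleGraph V} {G' : SimpleGraph W}

lemma Walk.dist_add_dist_le_length {x y v : V} (w : G.Walk x y)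
    (hv : v ∈ w.support) : G.dist x v + G.dist v y ≤ w.length := by
  classical
  rw [← w.take_spec hv, Walk.length_append]
  exact add_le_add (dist_le _) (dist_le _)

lemma Iso.dist_eq (f : G ≃g G') (u v : V) : G'.dist (f u) (f v) = G.dist u v := by
  by_cases h : G.Reachable u v
  · refine le_antisymm ?_ ?_
    · obtain ⟨w, hw⟩ := h.exists_walk_length_eq_dist
      simpa [hw] using dist_le (w.map f.toHom)
    · obtain ⟨w, hw⟩ := (f.reachable_iff.2 h).exists_walk_length_eq_dist
      simpa [hw] using
        dist_le ((w.map f.symm.toHom).copy (f.symm_apply_apply u) (f.symm_apply_apply v))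
  · rw [dist_eq_zero_of_not_reachable h, dist_eq_zero_of_not_reachable (mt f.reachable_iff.1 h)]

def Iso.deleteEdges (f : G ≃g G') (s : Set (Sym2 V)) :
    G.deleteEdges s ≃g G'.deleteEdges (Sym2.map f '' s) where
  toEquiv := f.toEquiv
  map_rel_iff' {u v} := by
    rw [deleteEdges_adj, deleteEdges_adj]
    change G'.Adj (f u) (f v) ∧ Sym2.map f s(u, v) ∉ Sym2.map f '' s ↔ _
    rw [f.map_adj_iff, (Sym2.map.injective f.injective).mem_set_image]

def Monitors (G : SimpleGraph V) (x y : V) (e : Sym2 V) : Prop :=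
  ¬ (G.deleteEdges {e}).Reachable x y ∨ (G.deleteEdges {e}).dist x y ≠ G.dist x y

lemma monitors_iff_forall_length_eq_dist {x y : V} {e : Sym2 V} :
    G.Monitors x y e ↔ ∀ w : G.Walk x y, w.length = G.dist x y → e ∈ w.edges := by
  refine ⟨fun hm w hw => by_contra fun he => ?_, fun hall => ?_⟩
  · have hr : (G.deleteEdges {e}).Reachable x y := ⟨w.toDeleteEdge e he⟩
    refine hm.elim (· hr) fun hd => hd (le_antisymm ?_ (hr.dist_anti (deleteEdges_le _)))
    exact (dist_le (w.toDeleteEdge e he)).trans_eq (by rw [Walk.length_transfer, hw])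
  · by_contra! hm
    obtain ⟨hr, hd⟩ : (G.deleteEdges {e}).Reachable x y ∧
        (G.deleteEdges {e}).dist x y = G.dist x y := by simpa [Monitors] using hm
    obtain ⟨w, hw⟩ := hr.exists_walk_length_eq_dist
    have he : e ∈ w.edges := by
      simpa using hall (w.mapLe (deleteEdges_le {e})) (by rw [Walk.length_mapLe, hw, hd])
    simpa [edgeSet_deleteEdges] using w.edges_subset_edgeSet he

lemma Iso.monitors_iff (f : G ≃g G') {x y : V} {e : Sym2 V} :
    G'.Monitors (f x) (f y) (e.map f) ↔ G.Monitors x y e := by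
  have hr : (G'.deleteEdges (Sym2.map f '' {e})).Reachable (f x) (f y) ↔ _ :=
    (f.deleteEdges {e}).reachable_iff
  have hd : (G'.deleteEdges (Sym2.map f '' {e})).dist (f x) (f y) = _ :=
    (f.deleteEdges {e}).dist_eq x y
  rw [Monitors, Monitors, ← Set.image_singleton, hr, hd, f.dist_eq]

end

section BoxProd

variable {α β : Type*} {G : SimpleGraph α} {H : SimpleGraph β}

lemma dist_boxProd {a₁ a₂ : α} {b₁ b₂ : β} (hG : G.Reachable a₁ a₂) (hH : H.Reachable b₁ b₂) :
    (G □ H).dist (a₁, b₁) (a₂, b₂) = G.dist a₁ a₂ + H.dist b₁ b₂ := by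
  have h := edist_boxProd (G := G) (H := H) (a₁, b₁) (a₂, b₂)
  rw [← hG.coe_dist_eq_edist, ← hH.coe_dist_eq_edist,
    ← (reachable_boxProd.2 ⟨hG, hH⟩).coe_dist_eq_edist] at h
  exact_mod_cast h

lemma Walk.mem_edges_boxProdLeft {a₁ a₂ a c : α} {b b₀ : β} (p : G.Walk a₁ a₂) :
    s((a, b), (c, b)) ∈ (p.boxProdLeft H b₀).edges ↔ b = b₀ ∧ s(a, c) ∈ p.edges := by
  rw [show (p.boxProdLeft H b₀).edges = p.edges.map (Sym2.map (·, b₀)) from Walk.edges_map _ _]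
  simp only [List.mem_map, Sym2.exists, Sym2.map_mk, Sym2.eq_iff, Prod.mk.injEq]
  constructor
  · rintro ⟨a', c', he, ⟨⟨rfl, rfl⟩, rfl, -⟩ | ⟨⟨rfl, rfl⟩, rfl, -⟩⟩
    · exact ⟨rfl, he⟩
    · exact ⟨rfl, Sym2.eq_swap ▸ he⟩
  · rintro ⟨rfl, he⟩
    exact ⟨a, c, he, .inl ⟨⟨rfl, rfl⟩, rfl, rfl⟩⟩

lemma Walk.eq_of_mem_edges_boxProdRight {b₁ b₂ b d : β} {a a₀ c : α} (q : H.Walk b₁ b₂)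
    (h : s((a, b), (c, d)) ∈ (q.boxProdRight G a₀).edges) : a = c := by
  rw [show (q.boxProdRight G a₀).edges = q.edges.map (Sym2.map (a₀, ·)) from
    Walk.edges_map _ _] at h
  simp only [List.mem_map, Sym2.exists, Sym2.map_mk, Sym2.eq_iff, Prod.mk.injEq] at h
  obtain ⟨_, _, -, ⟨⟨rfl, -⟩, rfl, -⟩ | ⟨⟨rfl, -⟩, rfl, -⟩⟩ := h <;> rfl

lemma Walk.exists_mem_edges_of_mem_edges_ofBoxProdLeft [DecidableEq β] [DecidableRel G.Adj]
    {x y : α × β} (w : (G □ H).Walk x y) {a c : α} (h : s(a, c) ∈ w.ofBoxProdLeft.edges) :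
    ∃ b, s((a, b), (c, b)) ∈ w.edges := by
  induction w with
  | nil => simp [Walk.ofBoxProdLeft] at h
  | @cons u v _ hadj w ih =>
    obtain ⟨u₁, u₂⟩ := u
    obtain ⟨v₁, v₂⟩ := v
    unfold Walk.ofBoxProdLeft Or.by_cases at h
    split_ifs at h with hG
    · obtain ⟨hG, rfl : u₂ = v₂⟩ := hG
      simp only [Walk.edges_cons, List.mem_cons] at h ⊢
      rcases h with h | h
      · refine ⟨u₂, Or.inl ?_⟩
        rcases Sym2.eq_iff.1 h with ⟨rfl, rfl⟩ | ⟨rfl, rfl⟩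
        · rfl
        · exact Sym2.eq_swap
      · exact (ih h).imp fun _ => Or.inr
    · obtain ⟨-, rfl : u₁ = v₁⟩ := (boxProd_adj.1 hadj).resolve_left hG
      exact (ih h).imp fun _ hb => List.mem_cons_of_mem _ hb

@[simp]
lemma Walk.length_boxProdLeft {a₁ a₂ : α} (b : β) (p : G.Walk a₁ a₂) :
    (p.boxProdLeft H b).length = p.length :=
  Walk.length_map _ _

@[simp]
lemma Walk.length_boxProdRight {b₁ b₂ : β} (a : α) (q : H.Walk b₁ b₂) :
    (q.boxProdRight G a).length = q.length :=
  Walk.length_map _ _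

lemma Monitors.boxProd_left (hG : G.Connected) (hH : H.Connected) {x y a c : α}
    (h : G.Monitors x y s(a, c)) (b : β) :
    (G □ H).Monitors (x, b) (y, b) s((a, b), (c, b)) := by
  classical
  rw [monitors_iff_forall_length_eq_dist] at h ⊢
  intro ω hω
  rw [dist_boxProd (hG.preconnected _ _) (hH.preconnected _ _), dist_self, add_zero] at hω
  have hproj : ω.ofBoxProdLeft.length = G.dist x y :=
    le_antisymm (by have := ω.length_boxProd; omega) (dist_le _)
  obtain ⟨b₀, hb₀⟩ := ω.exists_mem_edges_of_mem_edges_ofBoxProdLeft (h _ hproj)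
  obtain rfl : b₀ = b := by
    have hsum := ω.dist_add_dist_le_length (ω.fst_mem_support_of_mem_edges hb₀)
    rw [dist_boxProd (hG.preconnected _ _) (hH.preconnected _ _),
      dist_boxProd (hG.preconnected _ _) (hH.preconnected _ _)] at hsum
    have htri : G.dist x y ≤ G.dist x a + G.dist a y := hG.dist_triangle
    by_contra hne
    have := hH.pos_dist_of_ne (Ne.symm hne)
    omega
  exact hb₀

lemma Monitors.of_boxProd_left (hG : G.Connected) (hH : H.Connected) {x y a c : α}
    {u w b : β} (hac : G.Adj a c) (h : (G □ H).Monitors (x, u) (y, w) s((a, b), (c, b))) :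
    u = b ∧ w = b ∧ G.Monitors x y s(a, c) := by
  rw [monitors_iff_forall_length_eq_dist] at h
  have hd : (G □ H).dist (x, u) (y, w) = G.dist x y + H.dist u w :=
    dist_boxProd (hG.preconnected _ _) (hH.preconnected _ _)
  obtain ⟨p, hp⟩ := hG.exists_walk_length_eq_dist x y
  obtain ⟨q, hq⟩ := hH.exists_walk_length_eq_dist u w
  have hu : u = b := by
    have he := h ((p.boxProdLeft H u).append (q.boxProdRight G y)) (by simp [hp, hq, hd])
    rcases List.mem_append.1 (Walk.edges_append _ _ ▸ he) with he | he
    · exact (p.mem_edges_boxProdLeft.1 he).1.symm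
    · exact absurd (q.eq_of_mem_edges_boxProdRight he) hac.ne
  have hw : w = b := by
    have he := h ((q.boxProdRight G x).append (p.boxProdLeft H w))
      (by simp [hp, hq, hd, add_comm])
    rcases List.mem_append.1 (Walk.edges_append _ _ ▸ he) with he | he
    · exact absurd (q.eq_of_mem_edges_boxProdRight he) hac.ne
    · exact (p.mem_edges_boxProdLeft.1 he).1.symm
  refine ⟨hu, hw, monitors_iff_forall_length_eq_dist.2 fun p hp => ?_⟩
  subst hu hw
  exact (p.mem_edges_boxProdLeft.1 (h (p.boxProdLeft H _) (by simp [hp, hd]))).2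

lemma exists_monitors_boxProd_left_iff (hG : G.Connected) (hH : H.Connected) {a c : α}
    (hac : G.Adj a c) (b : β) (S : Set (α × β)) :
    (∃ p ∈ S, ∃ q ∈ S, (G □ H).Monitors p q s((a, b), (c, b))) ↔
      ∃ x ∈ {v | (v, b) ∈ S}, ∃ y ∈ {v | (v, b) ∈ S}, G.Monitors x y s(a, c) := by
  constructor
  · rintro ⟨⟨x, u⟩, hxu, ⟨y, w⟩, hyw, h⟩
    obtain ⟨rfl, rfl, hm⟩ := h.of_boxProd_left hG hH hac
    exact ⟨x, hxu, y, hyw, hm⟩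
  · rintro ⟨x, hx, y, hy, h⟩
    exact ⟨_, hx, _, hy, h.boxProd_left hG hH b⟩

lemma exists_monitors_boxProd_right_iff (hG : G.Connected) (hH : H.Connected) {b d : β}
    (hbd : H.Adj b d) (a : α) (S : Set (α × β)) :
    (∃ p ∈ S, ∃ q ∈ S, (G □ H).Monitors p q s((a, b), (a, d))) ↔
      ∃ u ∈ {v | (a, v) ∈ S}, ∃ w ∈ {v | (a, v) ∈ S}, H.Monitors u w s(b, d) := by
  refine Iff.trans ?_ (exists_monitors_boxProd_left_iff hH hG hbd a (Prod.swap ⁻¹' S))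
  constructor
  · rintro ⟨⟨a₁, b₁⟩, hp, ⟨a₂, b₂⟩, hq, h⟩
    exact ⟨(b₁, a₁), hp, (b₂, a₂), hq, (boxProdComm H G).monitors_iff.1 h⟩
  · rintro ⟨⟨b₁, a₁⟩, hp, ⟨b₂, a₂⟩, hq, h⟩
    exact ⟨(a₁, b₁), hp, (a₂, b₂), hq, (boxProdComm H G).monitors_iff.2 h⟩

lemma forall_adj_boxProd {P : α × β → α × β → Prop} :
    (∀ p q, (G □ H).Adj p q → P p q) ↔
      (∀ b a c, G.Adj a c → P (a, b) (c, b)) ∧ (∀ a b d, H.Adj b d → P (a, b) (a, d)) := by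
  refine ⟨fun h => ⟨fun b a c hac => h _ _ (boxProd_adj_left.2 hac),
    fun a b d hbd => h _ _ (boxProd_adj_right.2 hbd)⟩, ?_⟩
  rintro ⟨hl, hr⟩ ⟨a, b⟩ ⟨c, d⟩ hadj
  rcases boxProd_adj.1 hadj with ⟨hac, rfl : b = d⟩ | ⟨hbd, rfl : a = c⟩
  exacts [hl b a c hac, hr a b d hbd]

end BoxProd

end SimpleGraph

lemma isMEGSet_iff_forall_adj {V : Type*} {G : SimpleGraph V} {S : Set V} :
    IsMEGSet G S ↔ ∀ a c, G.Adj a c → ∃ x ∈ S, ∃ y ∈ S, G.Monitors x y s(a, c) := by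
  simp only [IsMEGSet, Sym2.forall, mem_edgeSet]
  rfl

theorem isMEGSet_boxProd_iff_slices_general {V W : Type*}
    (G : SimpleGraph V) (H : SimpleGraph W)
    (hG : G.Connected) (hH : H.Connected)
    (S : Set (V × W)) :
    IsMEGSet (G □ H) S ↔
      (∀ x : V, IsMEGSet H {v : W | (x, v) ∈ S}) ∧
      (∀ y : W, IsMEGSet G {v : V | (v, y) ∈ S}) := by
  rw [isMEGSet_iff_forall_adj, forall_adj_boxProd, and_comm]
  simp only [isMEGSet_iff_forall_adj]
  refine and_congr (forall_congr' fun a => ?_) (forall_congr' fun b => ?_)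
  · exact forall₂_congr fun b d => forall_congr' fun hbd =>
      exists_monitors_boxProd_right_iff hG hH hbd a S
  · exact forall₂_congr fun a c => forall_congr' fun hac =>
      exists_monitors_boxProd_left_iff hG hH hac b S

theorem isMEGSet_boxProd_iff_slices {V W : Type*} [Fintype V] [Fintype W]
    (G : SimpleGraph V) (H : SimpleGraph W)
    (hG : G.Connected) (hH : H.Connected)
    (hV : 1 < Fintype.card V) (hW : 1 < Fintype.card W)
    (S : Set (V × W)) :
    IsMEGSet (G □ H) S ↔
      (∀ x : V, IsMEGSet H {v : W | (x, v) ∈ S}) ∧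
      (∀ y : W, IsMEGSet G {v : V | (v, y) ∈ S}) :=
  isMEGSet_boxProd_iff_slices_general G H hG hH S
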